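/- arXiv:2509.13885 — 17 statements merged into one kernel-verified Lean document; each statement's English description precedes it below -/
import Mathlib

section
/- Let R be a ring in which every unit is central (U(R) ⊆ C(R)). Then every quasinilpotent element of R belongs to Δ(R), i.e., R^qnil ⊆ Δ(R). -/
/-- `Δ(R) = {r ∈ R : r + u is a unit for every unit u of R}`. -/
def Delta (R : Type*) [Ring R] : Set R :=
  {r : R | ∀ u : R, IsUnit u → IsUnit (r + u)}

/-- `comm²(a) = {y : x * y = y * x for every x commuting with a}`. -/
def comm2 {R : Type*} [Ring R] (a : R) : Set R :=
  {y : R | ∀ x : R, a * x = x * a → x * y = y * x}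

/-- An element `a` is Δ-quasipolar if there is an idempotent `p ∈ comm²(a)`
with `a + p ∈ Δ(R)`. -/
def IsDeltaQuasipolar {R : Type*} [Ring R] (a : R) : Prop :=
  ∃ p : R, IsIdempotentElem p ∧ p ∈ comm2 a ∧ a + p ∈ Delta R

/-- A ring is Δ-quasipolar if every element is Δ-quasipolar. -/
def DeltaQuasipolarRing (R : Type*) [Ring R] : Prop :=
  ∀ a : R, IsDeltaQuasipolar a

/-- The set of quasinilpotent elements of `R`. -/
def qnil (R : Type*) [Ring R] : Set R :=
  {a : R | ∀ x : R, a * x = x * a → IsUnit (1 + a * x)}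

/-- If every unit of `R` is central, then `R^qnil ⊆ Δ(R)`. -/
theorem qnil_subset_Delta_of_units_central {R : Type*} [Ring R]
    (h : ∀ u : R, IsUnit u → u ∈ Set.center R) :
    qnil R ⊆ Delta R := by
  intro a ha u hu
  obtain ⟨v, rfl⟩ := hu
  have hinv : (↑v⁻¹ : R) ∈ Set.center R := h _ (v⁻¹).isUnit
  have hcomm : a * ↑v⁻¹ = ↑v⁻¹ * a := ((Set.mem_center_iff.mp hinv).comm a).symm
  have h1 : IsUnit (1 + a * ↑v⁻¹) := ha _ hcomm
  have : a + ↑v = (1 + a * ↑v⁻¹) * ↑v := by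
    rw [add_mul, one_mul, mul_assoc, Units.inv_mul, mul_one, add_comm]
  rw [this]
  exact h1.mul v.isUnit
end

section
/- Every Δ-quasipolar ring is strongly Δ-clean: if R is a ring such that for every a ∈ R there exists an idempotent p ∈ comm²(a) with a + p ∈ Δ(R), then every element of R can be written as e + d where e is an idempotent, d ∈ Δ(R), and ed = de. -/
lemma neg_mem_Delta {R : Type*} [Ring R] {r : R} (h : r ∈ Delta R) : -r ∈ Delta R := by
  intro u hu
  have := h (-u) hu.neg
  have : IsUnit (-(r + -u)) := this.neg
  simpa [neg_add, add_comm] using this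

/-- Every Δ-quasipolar ring is strongly Δ-clean. -/
theorem stronglyDeltaClean_of_deltaQuasipolar {R : Type*} [Ring R]
    (hR : DeltaQuasipolarRing R) :
    ∀ a : R, ∃ e d : R, IsIdempotentElem e ∧ d ∈ Delta R ∧ a = e + d ∧ e * d = d * e := by
  intro a
  obtain ⟨p, hp, hp2, hd⟩ := hR (-a)
  refine ⟨p, a - p, hp, ?_, by abel, ?_⟩
  · have := neg_mem_Delta hd
    simpa [neg_add, sub_eq_add_neg, add_comm] using this
  · have hcomm : a * p = p * a := by simpa [neg_mul, mul_neg] using hp2 a (by simp [neg_mul, mul_neg])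
    have : p * (a - p) = a * p - p * p := by rw [mul_sub, hcomm]
    rw [this, sub_mul]
end

section
/- Let R be an abelian ring (every idempotent of R is central). If R is strongly Δ-clean, then R is Δ-quasipolar. -/
/-- An abelian strongly Δ-clean ring is Δ-quasipolar. -/
theorem deltaQuasipolar_of_abelian_stronglyDeltaClean {R : Type*} [Ring R]
    (hab : ∀ e : R, IsIdempotentElem e → e ∈ Set.center R)
    (hR : ∀ a : R, ∃ e d : R, IsIdempotentElem e ∧ d ∈ Delta R ∧ a = e + d ∧ e * d = d * e) :
    DeltaQuasipolarRing R := by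
  intro a
  obtain ⟨e, d, he, hd, hsum, -⟩ := hR (-a)
  refine ⟨e, he, fun x _ => ((hab e he).comm x).symm, ?_⟩
  have hae : a + e = -d := by linear_combination (norm := abel) -hsum
  rw [hae]
  intro u hu
  have := hd (-u) hu.neg
  rw [show -d + u = -(d + -u) by abel]
  exact this.neg
end

section
/- Let R be an abelian ring (every idempotent of R is central). Then R is Δ-quasipolar if and only if R is uniquely clean, i.e., every element of R can be written in exactly one way as the sum of an idempotent and a unit. -/
section Aux

variable {R : Type*} [Ring R]

lemma delta_neg' {d : R} (hd : d ∈ Delta R) : -d ∈ Delta R := by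
  intro v hv
  have h := (hd (-v) hv.neg).neg
  rwa [neg_add, neg_neg] at h

lemma delta_add' {c d : R} (hc : c ∈ Delta R) (hd : d ∈ Delta R) :
    c + d ∈ Delta R := by
  intro v hv
  have h := hc (d + v) (hd v hv)
  rwa [← add_assoc] at h

lemma unit_sub_one_mem_delta' (hqp : DeltaQuasipolarRing R) {u : R} (hu : IsUnit u) :
    u - 1 ∈ Delta R := by
  obtain ⟨p, hp, -, hpd⟩ := hqp (-u)
  have hup : IsUnit p := by
    have h := hpd u hu
    rwa [show -u + p + u = p by abel] at h
  have hpEq : p * p = p := hp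
  have hp1 : p = 1 := hup.mul_left_cancel (by rw [hpEq, mul_one])
  have h2 : -u + 1 ∈ Delta R := hp1 ▸ hpd
  have h3 := delta_neg' h2
  rwa [show -(-u + 1) = u - 1 by abel] at h3

lemma clean_unique' (hab : ∀ e : R, IsIdempotentElem e → e ∈ Set.center R)
    (hqp : DeltaQuasipolarRing R) {e u f v : R}
    (he : IsIdempotentElem e) (hu : IsUnit u) (hf : IsIdempotentElem f)
    (hv : IsUnit v) (h : e + u = f + v) : e = f ∧ u = v := by
  have heEq : e * e = e := he
  have hfEq : f * f = f := hf
  have hef : e * f = f * e := (Set.mem_center_iff.mp (hab e he)).comm f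
  have h1 : e - f = v - u := by
    rw [sub_eq_sub_iff_add_eq_add, h]; exact add_comm f v
  have hgD : e - f ∈ Delta R := by
    rw [show e - f = (v - 1) + -(u - 1) by rw [h1]; abel]
    exact delta_add' (unit_sub_one_mem_delta' hqp hv)
      (delta_neg' (unit_sub_one_mem_delta' hqp hu))
  have h2f : IsUnit (2 * f - 1) := by
    have hsq : (2 * f - 1) * (2 * f - 1) = 1 := by
      have expand : (2 * f - 1) * (2 * f - 1) = 4 * (f * f) - 4 * f + 1 := by
        noncomm_ring
      rw [expand, hfEq]; abel
    exact ⟨⟨2 * f - 1, 2 * f - 1, hsq, hsq⟩, rfl⟩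
  have hw : IsUnit (e + f - 1) := by
    have h3 := hgD (2 * f - 1) h2f
    rwa [show e - f + (2 * f - 1) = e + f - 1 by noncomm_ring] at h3
  have hz : (e - f) * (e + f - 1) = 0 := by
    have expand : (e - f) * (e + f - 1) = e * e + e * f - e - f * e - f * f + f := by
      noncomm_ring
    rw [expand, heEq, hfEq, hef]; abel
  have hef0 : e = f := by
    have hcan : (e - f) * (e + f - 1) = 0 * (e + f - 1) := by rw [hz, zero_mul]
    have := hw.mul_right_cancel hcan
    exact sub_eq_zero.mp this
  refine ⟨hef0, ?_⟩
  rw [hef0] at h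
  exact add_left_cancel h

lemma unit_corner' {g : R} (hg : IsIdempotentElem g) (hgc : ∀ x : R, g * x = x * g)
    {α β : R} (h1 : α * β = 1) (h2 : β * α = 1) :
    IsUnit (g * α + (1 - g)) := by
  have hgEq : g * g = g := hg
  have key : ∀ a b : R, a * b = 1 → (g * a + (1 - g)) * (g * b + (1 - g)) = 1 := by
    intro a b hab1
    have t1 : g * a * (g * b) = g := by
      rw [mul_assoc, ← mul_assoc a, ← hgc a, mul_assoc g a, hab1, mul_one, hgEq]
    have t2 : g * a * (1 - g) = 0 := by
      rw [mul_assoc, mul_sub, mul_one, ← hgc a, mul_sub, ← mul_assoc, hgEq, sub_self]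
    have t3 : (1 - g) * (g * b) = 0 := by
      rw [sub_mul, one_mul, ← mul_assoc, hgEq, sub_self]
    have t4 : (1 - g) * (1 - g) = 1 - g := hg.one_sub
    calc (g * a + (1 - g)) * (g * b + (1 - g))
        = g * a * (g * b) + g * a * (1 - g) + ((1 - g) * (g * b) + (1 - g) * (1 - g)) := by
          rw [add_mul, mul_add, mul_add]
      _ = g + 0 + (0 + (1 - g)) := by rw [t1, t2, t3, t4]
      _ = 1 := by abel
  exact ⟨⟨g * α + (1 - g), g * β + (1 - g), key α β h1, key β α h2⟩, rfl⟩

lemma key_unit' (hab : ∀ e : R, IsIdempotentElem e → e ∈ Set.center R)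
    (huc : ∀ a : R, ∃! p : R × R, IsIdempotentElem p.1 ∧ IsUnit p.2 ∧ a = p.1 + p.2)
    {u w : R} (hu : IsUnit u) (hw : IsUnit w) : IsUnit (1 + u + w) := by
  obtain ⟨⟨g, t⟩, ⟨hg, ht, hc⟩, -⟩ := huc (1 + u + w)
  have hgEq : g * g = g := hg
  have hgc : ∀ x : R, g * x = x * g := fun x => (Set.mem_center_iff.mp (hab g hg)).comm x
  have hUs : (↑hu.unit : R) = u := hu.unit_spec
  have hrel : g * u + g * w = g * t := by
    have h := congrArg (fun x => g * x) hc
    simp only [mul_add] at h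
    rw [mul_one, hgEq] at h
    rw [add_assoc] at h
    exact add_left_cancel h
  have hmove : ∀ z : R, u * (g * ((↑hu.unit⁻¹ : R) * z)) = g * z := by
    intro z
    calc u * (g * ((↑hu.unit⁻¹ : R) * z))
        = (u * g) * ((↑hu.unit⁻¹ : R) * z) := (mul_assoc _ _ _).symm
      _ = (g * u) * ((↑hu.unit⁻¹ : R) * z) := by rw [← hgc u]
      _ = g * (u * ((↑hu.unit⁻¹ : R) * z)) := mul_assoc _ _ _
      _ = g * ((u * (↑hu.unit⁻¹ : R)) * z) := by rw [← mul_assoc u]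
      _ = g * z := by rw [hu.mul_val_inv, one_mul]
  have hkey : g * ((↑hu.unit⁻¹ : R) * t) = g + g * ((↑hu.unit⁻¹ : R) * w) := by
    apply hu.mul_left_cancel
    rw [hmove t, mul_add, hmove w, ← hgc u]
    exact hrel.symm
  have hy1 : IsUnit (g * ((↑hu.unit⁻¹ : R) * t) + (1 - g)) := by
    refine unit_corner' hg hgc (α := (↑hu.unit⁻¹ : R) * t) (β := (↑ht.unit⁻¹ : R) * u) ?_ ?_
    · rw [mul_assoc, ← mul_assoc t, ht.mul_val_inv, one_mul, hu.val_inv_mul]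
    · rw [mul_assoc, ← mul_assoc u, hu.mul_val_inv, one_mul, ht.val_inv_mul]
  have hy2 : IsUnit (g * ((↑hu.unit⁻¹ : R) * w) + (1 - g)) := by
    refine unit_corner' hg hgc (α := (↑hu.unit⁻¹ : R) * w) (β := (↑hw.unit⁻¹ : R) * u) ?_ ?_
    · rw [mul_assoc, ← mul_assoc w, hw.mul_val_inv, one_mul, hu.val_inv_mul]
    · rw [mul_assoc, ← mul_assoc u, hu.mul_val_inv, one_mul, hw.val_inv_mul]
  obtain ⟨q, -, hq⟩ := huc (g * ((↑hu.unit⁻¹ : R) * t) + (1 - g))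
  have e1 := hq (0, g * ((↑hu.unit⁻¹ : R) * t) + (1 - g))
    ⟨IsIdempotentElem.zero, hy1, (zero_add _).symm⟩
  have e2 := hq (g, g * ((↑hu.unit⁻¹ : R) * w) + (1 - g))
    ⟨hg, hy2, by rw [hkey]; dsimp only; abel⟩
  have hg0 : g = 0 := congrArg Prod.fst (e2.trans e1.symm)
  rw [hc]
  show IsUnit (g + t)
  rw [hg0, zero_add]
  exact ht

end Aux

/-- An abelian ring is Δ-quasipolar iff it is uniquely clean. -/
theorem deltaQuasipolar_iff_uniquelyClean_of_abelian {R : Type*} [Ring R]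
    (hab : ∀ e : R, IsIdempotentElem e → e ∈ Set.center R) :
    DeltaQuasipolarRing R ↔
      ∀ a : R, ∃! p : R × R, IsIdempotentElem p.1 ∧ IsUnit p.2 ∧ a = p.1 + p.2 := by
  constructor
  · intro hqp a
    obtain ⟨p, hp, -, hpd⟩ := hqp a
    have hu : IsUnit (a + p - 1) := by
      have h := hpd (-1) isUnit_one.neg
      rwa [← sub_eq_add_neg] at h
    refine ⟨(1 - p, a + p - 1), ⟨hp.one_sub, hu, by noncomm_ring⟩, ?_⟩
    rintro ⟨f, v⟩ ⟨hf, hv, hav⟩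
    have h := clean_unique' hab hqp hf hv hp.one_sub hu (by rw [← hav]; noncomm_ring)
    exact Prod.ext h.1 h.2
  · intro huc a
    obtain ⟨⟨e, u⟩, ⟨he, hu, hae⟩, -⟩ := huc a
    have hec : ∀ x : R, e * x = x * e := fun x => (Set.mem_center_iff.mp (hab e he)).comm x
    refine ⟨1 - e, he.one_sub, ?_, ?_⟩
    · intro x _
      show x * (1 - e) = (1 - e) * x
      rw [mul_sub, sub_mul, mul_one, one_mul, hec x]
    · intro w hw
      have hk := key_unit' hab huc hu hw
      rwa [show 1 + u + w = a + (1 - e) + w by rw [hae]; abel] at hk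
end

section
/- If R is a Δ-quasipolar ring, then 2 ∈ Δ(R). -/
/-- If `R` is Δ-quasipolar, then `2 ∈ Δ(R)`. -/
theorem two_mem_Delta_of_deltaQuasipolar {R : Type*} [Ring R]
    (hR : DeltaQuasipolarRing R) : (2 : R) ∈ Delta R := by
  obtain ⟨p, hp, -, hΔ⟩ := hR 1
  have hpu : IsUnit p := by
    have := hΔ (-1) isUnit_one.neg
    simpa using this
  have hp1 : p = 1 := hpu.mul_left_cancel (by simpa using hp.eq)
  have : (1 : R) + p = 2 := by rw [hp1, one_add_one_eq_two]
  rw [← this]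
  exact hΔ
end

section
/- Let R be a Δ-quasipolar ring and u a unit of R. If p is any idempotent of R with p ∈ comm²(u) and u + p ∈ Δ(R), then p = 1. -/
/-- In a Δ-quasipolar ring, the Δ-spectral idempotent of a unit is `1`. -/
theorem spectral_idempotent_of_unit_eq_one {R : Type*} [Ring R]
    (hR : DeltaQuasipolarRing R) (u : R) (hu : IsUnit u)
    (p : R) (hp : IsIdempotentElem p) (hpc : p ∈ comm2 u) (hpd : u + p ∈ Delta R) :
    p = 1 := by
  have hpu : IsUnit p := by
    have := hpd (-u) hu.neg
    simpa using this
  have := hp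
  unfold IsIdempotentElem at this
  have h1 : p * p = p * 1 := by rw [this, mul_one]
  exact hpu.mul_left_cancel h1
end

section
/- Let R be a Δ-quasipolar ring and a ∈ R a nilpotent element. If p is any idempotent of R with p ∈ comm²(a) and a + p ∈ Δ(R), then p = 0. -/
/-- In a Δ-quasipolar ring, the Δ-spectral idempotent of a nilpotent element is `0`. -/
theorem spectral_idempotent_of_nilpotent_eq_zero {R : Type*} [Ring R]
    (hR : DeltaQuasipolarRing R) (a : R) (ha : IsNilpotent a)
    (p : R) (hp : IsIdempotentElem p) (hpc : p ∈ comm2 a) (hpd : a + p ∈ Delta R) :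
    p = 0 := by
  have hap : a * p = p * a := hpc a rfl
  have hu : IsUnit (a + p + (-1)) := hpd (-1) isUnit_one.neg
  have hcomm : Commute (-a) (a + p + (-1)) := by
    simp only [Commute, SemiconjBy]; noncomm_ring [hap]
  have hunit : IsUnit (p - 1) := by
    have := (ha.neg).isUnit_add_left_of_commute hu hcomm
    have h2 : a + p + -1 + -a = p - 1 := by abel
    rwa [h2] at this
  obtain ⟨u, hu'⟩ := hunit
  have h0 : p * (p - 1) = 0 := by
    have := hp; unfold IsIdempotentElem at this
    rw [mul_sub, this, mul_one, sub_self]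
  have : p * (p - 1) * ↑u⁻¹ = 0 := by rw [h0, zero_mul]
  rw [mul_assoc, ← hu', u.mul_inv, mul_one] at this
  exact this
end

section
/- If R is a Δ-quasipolar ring, then every nilpotent element of R belongs to Δ(R), i.e., Nil(R) ⊆ Δ(R). -/
/-- If `R` is Δ-quasipolar, then `Nil(R) ⊆ Δ(R)`. -/
theorem nilpotent_mem_Delta_of_deltaQuasipolar {R : Type*} [Ring R]
    (hR : DeltaQuasipolarRing R) :
    {a : R | IsNilpotent a} ⊆ Delta R := by

  intro a ha
  obtain ⟨n, hn⟩ := ha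
  obtain ⟨p, hp, hc, hd⟩ := hR a
  have hap : a * p = p * a := hc a rfl
  -- 1 - 2p is a unit
  have hsq : (1 - 2 * p) * (1 - 2 * p) = 1 := by
    have : (1 - 2 * p) * (1 - 2 * p) = 1 - 4 * p + 4 * (p * p) := by noncomm_ring
    rw [this, hp]; noncomm_ring
  have hu1 : IsUnit (1 - 2 * p) := ⟨⟨1 - 2 * p, 1 - 2 * p, hsq, hsq⟩, rfl⟩
  have hv : IsUnit (a + 1 - p) := by
    have := hd (1 - 2 * p) hu1
    have heq : a + p + (1 - 2 * p) = a + 1 - p := by noncomm_ring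
    rwa [heq] at this
  obtain ⟨u, hu⟩ := hv
  have hcom : Commute a (↑u : R) := by
    show a * (↑u : R) = ↑u * a
    rw [hu]
    rw [mul_sub, sub_mul, mul_add, add_mul, hap, mul_one, one_mul]
  have hcinv : Commute ((↑u⁻¹ : R)) a := (hcom.units_inv_right).symm
  have hup : (↑u : R) * p = a * p := by
    rw [hu, sub_mul, add_mul, hp, one_mul]; noncomm_ring
  have hkey : p = (↑u⁻¹ : R) * (a * p) := by
    rw [← hup, ← mul_assoc, ← Units.val_mul, inv_mul_cancel, Units.val_one, one_mul]
  have hiter : ∀ k : ℕ, p = ((↑u⁻¹ : R) * a) ^ k * p := by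
    intro k
    induction k with
    | zero => simp
    | succ k ih =>
      rw [pow_succ, mul_assoc, mul_assoc, ← hkey]
      exact ih
  have hpow : ((↑u⁻¹ : R) * a) ^ n = 0 := by
    rw [hcinv.mul_pow, hn, mul_zero]
  have hp0 : p = 0 := by
    have := hiter n
    rw [hpow, zero_mul] at this
    exact this
  rw [hp0, add_zero] at hd
  exact hd
end

section
/- Let R be a ring, a ∈ R, p an idempotent of R with p ∈ comm²(a), and d ∈ Δ(R) with a + p = d. Then the left annihilator of a is contained in the left annihilator of p, and the right annihilator of a is contained in the right annihilator of p; that is, for every x ∈ R, xa = 0 implies xp = 0, and ax = 0 implies px = 0. -/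
/-- If `a + p = d` is a Δ-quasipolar representation of `a`, then
`ann_l(a) ⊆ ann_l(p)` and `ann_r(a) ⊆ ann_r(p)`. -/
theorem annihilator_subset_of_deltaQuasipolar_rep {R : Type*} [Ring R]
    (a p d : R) (hp : IsIdempotentElem p) (hpc : p ∈ comm2 a)
    (hd : d ∈ Delta R) (hrep : a + p = d) :
    (∀ x : R, x * a = 0 → x * p = 0) ∧ (∀ x : R, a * x = 0 → p * x = 0) := by
  have hap : a * p = p * a := hpc a rfl
  have hu : IsUnit (a + p + (-1)) := by
    have := hd (-1) (by simpa using isUnit_one.neg)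
    rwa [hrep]
  set u : R := a + p + (-1) with hu_def
  have hup : u * p = p * u := by
    simp only [hu_def, add_mul, mul_add, neg_mul, mul_neg, one_mul, mul_one, hap,
      hp.eq]
  have hupa : u * p = a * p := by
    simp [hu_def, add_mul, hp.eq]
  constructor
  · intro x hx
    have h1 : x * p * u = 0 := by
      rw [mul_assoc, ← hup, hupa, ← mul_assoc, hx, zero_mul]
    obtain ⟨v, hv⟩ := hu
    have := congrArg (· * (↑v⁻¹ : R)) h1
    simpa [mul_assoc, ← hv, Units.mul_inv_cancel_right] using this
  · intro x hx
    have hpu : p * u = p * a := by rw [← hup, hupa, hap]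
    have h1 : u * (p * x) = 0 := by
      rw [← mul_assoc, hup, hpu, mul_assoc, hx, mul_zero]
    obtain ⟨v, hv⟩ := hu
    have := congrArg ((↑v⁻¹ : R) * ·) h1
    simpa [← mul_assoc, ← hv, Units.inv_mul_cancel_left] using this
end

section
/- Let R be an abelian ring (every idempotent is central). If R is J-clean, i.e., every element of R can be written as the sum of an idempotent and an element of the Jacobson radical J(R), then R is Δ-quasipolar. -/
/-- In any ring, `1 + j` is a unit for `j` in the Jacobson radical. -/
lemma isUnit_one_add_of_mem_jacobson_bot {R : Type*} [Ring R] {j : R}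
    (h : j ∈ Ideal.jacobson (⊥ : Ideal R)) : IsUnit (1 + j) := by
  obtain ⟨z, hz⟩ := Ideal.mem_jacobson_iff.1 h 1
  rw [Ideal.mem_bot, mul_one, sub_eq_zero] at hz
  -- hz : z * j + z = 1, i.e. z * (1 + j) = 1
  have hz1 : z * (1 + j) = 1 := by rw [mul_add, mul_one, add_comm]; exact hz
  -- z = 1 + (-(z*j)) with -(z*j) ∈ J, so z also has a left inverse
  have hzj : -(z * j) ∈ Ideal.jacobson (⊥ : Ideal R) := by
    exact neg_mem (Ideal.mul_mem_left _ z h)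
  obtain ⟨w, hw⟩ := Ideal.mem_jacobson_iff.1 hzj 1
  rw [Ideal.mem_bot, mul_one, sub_eq_zero] at hw
  have hwz : w * z = 1 := by
    have hzdef : z = 1 + -(z * j) := by
      have h' : z * j + z = 1 := hz
      rw [← sub_eq_add_neg, eq_sub_iff_add_eq, add_comm]
      exact h'
    rw [hzdef, mul_add, mul_one, add_comm]
    exact hw
  -- two-sided inverse: w = 1 + j
  have hweq : w = 1 + j := by
    calc w = w * (z * (1 + j)) := by rw [hz1, mul_one]
    _ = (w * z) * (1 + j) := by rw [mul_assoc]
    _ = 1 + j := by rw [hwz, one_mul]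
  exact ⟨⟨1 + j, z, hweq ▸ hwz, hz1⟩, rfl⟩

/-- An abelian `J`-clean ring is Δ-quasipolar. -/
theorem deltaQuasipolar_of_abelian_JClean {R : Type*} [Ring R]
    (hab : ∀ e : R, IsIdempotentElem e → e ∈ Set.center R)
    (hJ : ∀ a : R, ∃ e j : R, IsIdempotentElem e ∧
      j ∈ Ideal.jacobson (⊥ : Ideal R) ∧ a = e + j) :
    DeltaQuasipolarRing R := by
  classical
  set J := Ideal.jacobson (⊥ : Ideal R) with hJdef
  -- 2 ∈ J
  have h2 : (2 : R) ∈ J := by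
    obtain ⟨e0, j0, he0, hj0, h0⟩ := hJ (-1)
    have he0u : IsUnit e0 := by
      have : e0 = -(1 + j0) := by
        rw [neg_add, ← sub_eq_add_neg]
        exact eq_sub_of_add_eq h0.symm
      rw [this]
      exact (isUnit_one_add_of_mem_jacobson_bot hj0).neg
    have he01 : e0 = 1 := by
      have := he0
      unfold IsIdempotentElem at this
      exact he0u.mul_left_cancel (by rw [this, mul_one])
    have hj0' : j0 = -2 := by
      rw [he01] at h0
      have := eq_sub_of_add_eq' h0.symm
      rw [this]; norm_num
    rw [show (2 : R) = -j0 by rw [hj0']; norm_num]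
    exact neg_mem hj0
  intro a
  obtain ⟨e, j, he, hj, hae⟩ := hJ a
  refine ⟨e, he, ?_, ?_⟩
  · intro x _
    exact ((Set.mem_center_iff).1 (hab e he)).comm x |>.symm
  · have hmem : a + e ∈ J := by
      have : a + e = e * 2 + j := by rw [hae, mul_two]; abel
      rw [this]
      exact add_mem (Ideal.mul_mem_left _ e h2) hj
    intro u hu
    obtain ⟨v, rfl⟩ := hu
    have h1 : ((v⁻¹ : Rˣ) : R) * (a + e) ∈ J := Ideal.mul_mem_left _ _ hmem
    have : (a + e) + (v : R) = (v : R) * (1 + ((v⁻¹ : Rˣ) : R) * (a + e)) := by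
      rw [mul_add, mul_one, ← mul_assoc]
      simp [add_comm]
    rw [this]
    exact (v.isUnit).mul (isUnit_one_add_of_mem_jacobson_bot h1)
end

section
/- Let R be a Δ-quasipolar ring with Δ(R) = J(R). Then R is strongly π-regular (for every a ∈ R there exist a positive integer n and b ∈ R with a^n = a^{n+1} b) if and only if J(R) = R^qnil = Nil(R) = Δ(R). -/
section Aux

variable {R : Type*} [Ring R]

/-- `jacobson ⊥` is closed under right multiplication. -/
lemma aux_J_mul_right {x : R} (y : R) (hx : x ∈ Ideal.jacobson (⊥ : Ideal R)) :
    x * y ∈ Ideal.jacobson (⊥ : Ideal R) := by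
  exact Ideal.mul_mem_right y _ hx

/-- Elements of `jacobson ⊥` have a "left quasi-inverse" property. -/
lemma aux_J_left_inv {x : R} (hx : x ∈ Ideal.jacobson (⊥ : Ideal R)) (y : R) :
    ∃ z : R, z * (y * x + 1) = 1 := by
  obtain ⟨z, hz⟩ := Ideal.mem_jacobson_iff.1 hx y
  rw [Ideal.mem_bot, sub_eq_zero] at hz
  exact ⟨z, by rw [mul_add, mul_one, ← mul_assoc, hz]⟩

/-- `1 + x` is a unit for `x` in the Jacobson radical. -/
lemma aux_J_unit {x : R} (hx : x ∈ Ideal.jacobson (⊥ : Ideal R)) : IsUnit (1 + x) := by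
  obtain ⟨z, hz⟩ := aux_J_left_inv hx 1
  rw [one_mul] at hz
  have hz' : z = 1 - z * x := by
    have h := hz
    rw [mul_add, mul_one] at h
    linear_combination (norm := noncomm_ring) h
  have hzx : -(z * x) ∈ Ideal.jacobson (⊥ : Ideal R) :=
    Submodule.neg_mem _ (Ideal.mul_mem_left _ z hx)
  obtain ⟨w, hw⟩ := aux_J_left_inv hzx 1
  rw [one_mul, neg_add_eq_sub, ← hz'] at hw
  have hwxz : w = x + 1 := by
    calc w = w * (z * (x + 1)) := by rw [hz, mul_one]
    _ = (w * z) * (x + 1) := by rw [mul_assoc]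
    _ = x + 1 := by rw [hw, one_mul]
  rw [hwxz] at hw
  rw [add_comm]
  exact ⟨⟨x + 1, z, hw, hz⟩, rfl⟩

lemma aux_eq_zero_of_mul_unit {x y : R} (hy : IsUnit y) (h : x * y = 0) : x = 0 := by
  obtain ⟨u, rfl⟩ := hy
  calc x = x * ↑u * ↑u⁻¹ := by rw [mul_assoc, Units.mul_inv, mul_one]
  _ = 0 := by rw [h, zero_mul]

lemma aux_mem_of_mul_unit {x y : R} (hy : IsUnit y)
    (h : x * y ∈ Ideal.jacobson (⊥ : Ideal R)) : x ∈ Ideal.jacobson (⊥ : Ideal R) := by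
  obtain ⟨u, rfl⟩ := hy
  have : x * ↑u * ↑u⁻¹ ∈ Ideal.jacobson (⊥ : Ideal R) := aux_J_mul_right _ h
  rwa [mul_assoc, Units.mul_inv, mul_one] at this

end Aux

/-- Let `R` be Δ-quasipolar with `Δ(R) = J(R)`. Then `R` is strongly π-regular iff
`J(R) = R^qnil = Nil(R) = Δ(R)`. -/
theorem stronglyPiRegular_iff_of_deltaQuasipolar {R : Type*} [Ring R]
    (hR : DeltaQuasipolarRing R)
    (hDJ : Delta R = {x : R | x ∈ Ideal.jacobson (⊥ : Ideal R)}) :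
    (∀ a : R, ∃ n : ℕ, 0 < n ∧ ∃ b : R, a ^ n = a ^ (n + 1) * b) ↔
      ({x : R | x ∈ Ideal.jacobson (⊥ : Ideal R)} = qnil R ∧
        qnil R = {a : R | IsNilpotent a} ∧
        {a : R | IsNilpotent a} = Delta R) := by
  -- J ⊆ qnil
  have hJq : {x : R | x ∈ Ideal.jacobson (⊥ : Ideal R)} ⊆ qnil R := by
    intro a ha x hx
    exact aux_J_unit (aux_J_mul_right x ha)
  -- qnil ⊆ J  (uses Δ-quasipolarity and Δ = J)
  have hqJ : qnil R ⊆ {x : R | x ∈ Ideal.jacobson (⊥ : Ideal R)} := by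
    intro a ha
    obtain ⟨p, hp, hc, hd⟩ := hR a
    have hpa : a * p = p * a := hc a rfl
    have hu : IsUnit (1 + a) := by
      have := ha 1 (by rw [mul_one, one_mul]); rwa [mul_one] at this
    have hapJ : a + p ∈ Ideal.jacobson (⊥ : Ideal R) := by
      rw [hDJ] at hd; exact hd
    have h1 : p * (1 + a) = (a + p) * p := by
      rw [mul_add, mul_one, add_mul, hp, ← hpa, add_comm]
    have hpJ : p ∈ Ideal.jacobson (⊥ : Ideal R) := by
      refine aux_mem_of_mul_unit hu ?_
      rw [h1]; exact aux_J_mul_right p hapJ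
    have hup : IsUnit (1 - p) := by
      have := aux_J_unit (Submodule.neg_mem _ hpJ)
      rwa [← sub_eq_add_neg] at this
    have hp0 : p = 0 := by
      refine aux_eq_zero_of_mul_unit hup ?_
      rw [mul_sub, mul_one, hp, sub_self]
    have : a ∈ Ideal.jacobson (⊥ : Ideal R) := by
      have := hapJ; rwa [hp0, add_zero] at this
    exact this
  -- Nil ⊆ qnil
  have hNq : {a : R | IsNilpotent a} ⊆ qnil R := by
    intro a ha x hx
    exact ((Commute.isNilpotent_mul_right hx ha)).isUnit_one_add
  constructor
  · -- forward: strongly π-regular ⇒ equalities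
    intro hspr
    -- J ⊆ Nil
    have hJN : {x : R | x ∈ Ideal.jacobson (⊥ : Ideal R)} ⊆ {a : R | IsNilpotent a} := by
      intro a ha
      obtain ⟨n, hn, b, hab⟩ := hspr a
      have hu : IsUnit (1 - a * b) := by
        have := aux_J_unit (Submodule.neg_mem _ (aux_J_mul_right b ha))
        rwa [← sub_eq_add_neg] at this
      refine ⟨n, aux_eq_zero_of_mul_unit hu ?_⟩
      rw [mul_sub, mul_one, ← mul_assoc, ← pow_succ, ← hab, sub_self]
    have e1 : {x : R | x ∈ Ideal.jacobson (⊥ : Ideal R)} = qnil R :=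
      le_antisymm hJq hqJ
    have e2 : qnil R = {a : R | IsNilpotent a} :=
      le_antisymm (fun a ha => hJN (hqJ ha)) hNq
    have e3 : {a : R | IsNilpotent a} = Delta R := by
      rw [hDJ]
      exact le_antisymm (fun a ha => hqJ (hNq ha)) hJN
    exact ⟨e1, e2, e3⟩
  · -- reverse: equalities ⇒ strongly π-regular
    rintro ⟨h1, h2, h3⟩ a
    obtain ⟨p, hp, hc, hd⟩ := hR a
    rw [← h3] at hd
    have hnil : IsNilpotent (a + p) := hd
    obtain ⟨k, hk⟩ := hnil
    have hpa : a * p = p * a := hc a rfl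
    set n : R := a + p with hn
    set c : R := a + p - 1 with hcdef
    have hCap : Commute a p := hpa
    have hCan : Commute a n := (Commute.refl a).add_right hCap
    have hCac : Commute a c := (hCan).sub_right (Commute.one_right a)
    have hCpn : Commute p n := (hCap.symm).add_right (Commute.refl p)
    have hCpc : Commute p c := hCpn.sub_right (Commute.one_right p)
    -- a * p = c * p
    have hap_c : a * p = c * p := by
      rw [hcdef, sub_mul, add_mul, hp, one_mul, add_sub_cancel_right]
    -- a * (1 - p) = n * (1 - p)
    have ha1p : a * (1 - p) = n * (1 - p) := by
      rw [hn, mul_sub, mul_sub, mul_one, mul_one, add_mul, hp]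
      abel
    -- powers
    have key1 : ∀ m : ℕ, a ^ m * p = c ^ m * p := by
      intro m
      induction m with
      | zero => simp
      | succ m ih =>
        calc a ^ (m + 1) * p = a ^ m * (a * p) := by rw [pow_succ, mul_assoc]
          _ = a ^ m * (c * p) := by rw [hap_c]
          _ = c * (a ^ m * p) := by rw [← mul_assoc, (hCac.pow_left m).eq, mul_assoc]
          _ = c * (c ^ m * p) := by rw [ih]
          _ = c ^ (m + 1) * p := by rw [← mul_assoc, ← pow_succ']
    have key2 : ∀ m : ℕ, a ^ m * (1 - p) = n ^ m * (1 - p) := by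
      intro m
      induction m with
      | zero => simp
      | succ m ih =>
        calc a ^ (m + 1) * (1 - p) = a ^ m * (a * (1 - p)) := by rw [pow_succ, mul_assoc]
          _ = a ^ m * (n * (1 - p)) := by rw [ha1p]
          _ = n * (a ^ m * (1 - p)) := by rw [← mul_assoc, (hCan.pow_left m).eq, mul_assoc]
          _ = n * (n ^ m * (1 - p)) := by rw [ih]
          _ = n ^ (m + 1) * (1 - p) := by rw [← mul_assoc, ← pow_succ']
    have key : ∀ m : ℕ, k ≤ m → a ^ m = c ^ m * p := by
      intro m hm
      have hnm : n ^ m = 0 := by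
        obtain ⟨j, rfl⟩ := Nat.exists_eq_add_of_le hm
        rw [pow_add, hk, zero_mul]
      calc a ^ m = a ^ m * p + a ^ m * (1 - p) := by
            rw [← mul_add, add_sub_cancel, mul_one]
        _ = c ^ m * p + n ^ m * (1 - p) := by rw [key1, key2]
        _ = c ^ m * p := by rw [hnm, zero_mul, add_zero]
    -- c is a unit
    have huc : IsUnit c := IsNilpotent.isUnit_sub_one ⟨k, hk⟩
    have hCpu : Commute p (↑huc.unit⁻¹ : R) := by
      have h : Commute p (huc.unit : R) := by rwa [IsUnit.unit_spec]
      exact h.units_inv_right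
    set m : ℕ := max k 1 with hm
    refine ⟨m, lt_of_lt_of_le Nat.one_pos (le_max_right k 1), ↑huc.unit⁻¹, ?_⟩
    have hkm : k ≤ m := le_max_left k 1
    have hkm1 : k ≤ m + 1 := hkm.trans (Nat.le_succ m)
    calc a ^ m = c ^ m * p := key m hkm
      _ = c ^ m * (c * ↑huc.unit⁻¹) * p := by rw [huc.mul_val_inv, mul_one]
      _ = c ^ (m + 1) * ↑huc.unit⁻¹ * p := by rw [← mul_assoc, ← pow_succ]
      _ = c ^ (m + 1) * (p * ↑huc.unit⁻¹) := by rw [mul_assoc, ← hCpu.eq]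
      _ = a ^ (m + 1) * ↑huc.unit⁻¹ := by rw [← mul_assoc, ← key (m + 1) hkm1]
end

section
/- Let I be an index set and (R_i)_{i ∈ I} a family of rings. Then every R_i is Δ-quasipolar if and only if the direct product ring Π_{i ∈ I} R_i is Δ-quasipolar. -/
lemma pi_isUnit_iff' {I : Type*} {R : I → Type*} [∀ i, Monoid (R i)] {f : ∀ i, R i} :
    IsUnit f ↔ ∀ i, IsUnit (f i) := by
  constructor
  · rintro ⟨u, rfl⟩ i
    exact ⟨⟨u.val i, u.inv i, congrFun u.val_inv i, congrFun u.inv_val i⟩, rfl⟩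
  · intro h
    refine ⟨⟨f, fun i => ↑(h i).unit⁻¹, ?_, ?_⟩, rfl⟩ <;> funext i <;>
      simp [IsUnit.mul_val_inv, IsUnit.val_inv_mul]

/-- Each `R i` is Δ-quasipolar iff the direct product `Π i, R i` is Δ-quasipolar. -/
theorem pi_deltaQuasipolar_iff {I : Type*} (R : I → Type*) [∀ i, Ring (R i)] :
    (∀ i, DeltaQuasipolarRing (R i)) ↔ DeltaQuasipolarRing (∀ i, R i) := by
  classical
  constructor
  · intro h a
    choose p hp hc hd using fun i => h i (a i)
    refine ⟨p, ?_, ?_, ?_⟩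
    · funext i; exact hp i
    · intro x hx; funext i; exact hc i (x i) (congrFun hx i)
    · intro u hu
      rw [pi_isUnit_iff'] at hu ⊢
      intro i; exact hd i (u i) (hu i)
  · intro h i a
    obtain ⟨p, hp, hc, hd⟩ := h (Pi.single i a)
    refine ⟨p i, congrFun hp i, ?_, ?_⟩
    · intro x hx
      have hcomm : Pi.single i a * Pi.single i x = Pi.single i x * Pi.single i a := by
        funext j
        by_cases hj : j = i
        · subst hj; simpa using hx
        · simp [Pi.single_eq_of_ne hj]
      have := congrFun (hc (Pi.single i x) hcomm) i
      simpa using this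
    · intro u hu
      have hu' : IsUnit (Function.update (1 : ∀ j, R j) i u) := by
        rw [pi_isUnit_iff']
        intro j
        by_cases hj : j = i
        · subst hj; simpa using hu
        · simp [Function.update_of_ne hj]
      have := hd _ hu'
      rw [pi_isUnit_iff'] at this
      simpa using this i
end

section
/- Let R be a Δ-quasipolar ring and e an idempotent of R. Then the corner ring eRe (with identity e) is Δ-quasipolar: for every a ∈ eRe there exists an idempotent q ∈ eRe such that q commutes with every element of eRe commuting with a, and a + q ∈ Δ(eRe), where Δ(eRe) = {r ∈ eRe : r + v is a unit of eRe for every unit v of the ring eRe}. -/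
/-- `v` is a unit of the corner noncomm_ring `eRe` (with identity `e`). -/
def IsCornerUnit {R : Type*} [Ring R] (e v : R) : Prop :=
  ∃ w : R, e * w * e = w ∧ v * w = e ∧ w * v = e

/-- An element of the corner `eRe` absorbs `e` on both sides. -/
lemma corner_absorb {R : Type*} [Ring R] {e x : R} (he : IsIdempotentElem e)
    (hx : e * x * e = x) : e * x = x ∧ x * e = x := by
  constructor
  · calc e * x = e * (e * x * e) := by rw [hx]
      _ = e * x * e := by rw [← mul_assoc, ← mul_assoc, he]
      _ = x := hx
  · calc x * e = (e * x * e) * e := by rw [hx]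
      _ = e * x * e := by rw [mul_assoc, mul_assoc, he, ← mul_assoc]
      _ = x := hx

/-- Corner inverse lemma: if `z` is invertible with inverse `s` and commutes with `e`,
then `e*z*e` and `e*s*e` are mutually inverse in the corner ring. -/
lemma corner_inv {R : Type*} [Ring R] {e z s : R} (he : IsIdempotentElem e)
    (hez : e * z = z * e) (hts : z * s = 1) (hst : s * z = 1) :
    (e * z * e) * (e * s * e) = e ∧ (e * s * e) * (e * z * e) = e := by
  have hes : e * s = s * e := by
    calc e * s = (s * z) * (e * s) := by rw [hst, one_mul]
      _ = s * (z * e) * s := by noncomm_ring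
      _ = s * (e * z) * s := by rw [hez]
      _ = (s * e) * (z * s) := by noncomm_ring
      _ = s * e := by rw [hts, mul_one]
  constructor
  · calc (e * z * e) * (e * s * e) = e * z * (e * e) * (s * e) := by noncomm_ring
      _ = e * (z * e) * (s * e) := by rw [he, mul_assoc e z e]
      _ = e * (e * z) * (s * e) := by rw [hez]
      _ = (e * e) * (z * s) * e := by noncomm_ring
      _ = e := by rw [he, hts, mul_one, he]
  · calc (e * s * e) * (e * z * e) = e * s * (e * e) * (z * e) := by noncomm_ring
      _ = e * (s * e) * (z * e) := by rw [he, mul_assoc e s e]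
      _ = e * (e * s) * (z * e) := by rw [hes]
      _ = (e * e) * (s * z) * e := by noncomm_ring
      _ = e := by rw [he, hst, mul_one, he]

/-- If `R` is Δ-quasipolar and `e` is an idempotent, then the corner noncomm_ring `eRe`
is Δ-quasipolar: every `a ∈ eRe` admits an idempotent `q ∈ eRe` commuting with
every element of `eRe` commuting with `a`, such that `a + q ∈ Δ(eRe)`. -/
theorem corner_deltaQuasipolar {R : Type*} [Ring R]
    (hR : DeltaQuasipolarRing R) (e : R) (he : IsIdempotentElem e) :
    ∀ a : R, e * a * e = a →
      ∃ q : R, e * q * e = q ∧ IsIdempotentElem q ∧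
        (∀ x : R, e * x * e = x → a * x = x * a → x * q = q * x) ∧
        (∀ v : R, e * v * e = v → IsCornerUnit e v → IsCornerUnit e (a + q + v)) := by
  intro a ha
  obtain ⟨p, hp, hpc, hpd⟩ := hR a
  obtain ⟨hea, hae⟩ := corner_absorb he ha
  have hpe : e * p = p * e := hpc e (by rw [hae, hea])
  have hq : e * p * e = p * e := by rw [hpe, mul_assoc, he]
  have hq' : e * p * e = e * p := by rw [mul_assoc, ← hpe, ← mul_assoc, he]
  refine ⟨e * p * e, ?_, ?_, ?_, ?_⟩
  · calc e * (e * p * e) * e = (e * e) * p * (e * e) := by noncomm_ring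
      _ = e * p * e := by rw [he]
  · show (e * p * e) * (e * p * e) = e * p * e
    rw [hq]
    rw [show p * e * (p * e) = p * (e * p) * e from by noncomm_ring, hpe,
      show p * (p * e) * e = p * p * (e * e) from by noncomm_ring, hp, he]
  · intro x hx hax
    obtain ⟨hex, hxe⟩ := corner_absorb he hx
    have hxp : x * p = p * x := hpc x hax
    have h1 : x * (e * p * e) = p * x := by
      rw [hq, ← mul_assoc, hxp, mul_assoc, hxe]
    have h2 : (e * p * e) * x = p * x := by
      rw [hq, mul_assoc, hex]
    rw [h1, h2]
  · intro v hv ⟨w, hw, hvw, hwv⟩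
    obtain ⟨hev, hve⟩ := corner_absorb he hv
    obtain ⟨hew, hwe⟩ := corner_absorb he hw
    -- u = v + 1 - e is a unit of R
    have hu : IsUnit (v + 1 - e) := by
      refine ⟨⟨v + 1 - e, w + 1 - e, ?_, ?_⟩, rfl⟩
      · have : (v + 1 - e) * (w + 1 - e)
            = v * w + v - v * e + w + 1 - e - e * w - e + e * e := by noncomm_ring
        rw [this, hvw, hve, hew, he]; abel
      · have : (w + 1 - e) * (v + 1 - e)
            = w * v + w - w * e + v + 1 - e - e * v - e + e * e := by noncomm_ring
        rw [this, hwv, hwe, hev, he]; abel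
    obtain ⟨t, ht⟩ := hpd (v + 1 - e) hu
    have hts : (a + p + (v + 1 - e)) * ↑t⁻¹ = 1 := by rw [← ht]; exact t.mul_inv
    have hst : (↑t⁻¹ : R) * (a + p + (v + 1 - e)) = 1 := by rw [← ht]; exact t.inv_mul
    have hez : e * (a + p + (v + 1 - e)) = (a + p + (v + 1 - e)) * e := by
      have h1 : e * (a + p + (v + 1 - e)) = e * a + e * p + (e * v + e * 1 - e * e) := by
        noncomm_ring
      have h2 : (a + p + (v + 1 - e)) * e = a * e + p * e + (v * e + 1 * e - e * e) := by
        noncomm_ring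
      rw [h1, h2, hea, hae, hev, hve, he, mul_one, one_mul, hpe]
    obtain ⟨k1, k2⟩ := corner_inv he hez hts hst
    have heze : e * (a + p + (v + 1 - e)) * e = a + e * p * e + v := by
      rw [show e * (a + p + (v + 1 - e)) * e
          = e * a * e + e * p * e + (e * v * e + e * e - e * (e * e)) from by noncomm_ring,
        ha, hv, he, he]
      abel
    refine ⟨e * ↑t⁻¹ * e, ?_, ?_, ?_⟩
    · rw [show e * (e * (↑t⁻¹ : R) * e) * e = (e * e) * ↑t⁻¹ * (e * e) from by noncomm_ring, he]
    · rw [← heze]; exact k1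
    · rw [← heze]; exact k2
end

section
/- For any nontrivial ring R, the polynomial ring R[x] is not Δ-quasipolar. -/
open Polynomial in
/-- An idempotent polynomial with central coefficients has zero coefficients in
positive degrees. -/
lemma coeff_eq_zero_of_idem {R : Type*} [Ring R] (p : R[X]) (hp : p * p = p)
    (hc : ∀ r : R, C r * p = p * C r) : ∀ n : ℕ, n ≠ 0 → p.coeff n = 0 := by
  have hcomm : ∀ r : R, ∀ n : ℕ, r * p.coeff n = p.coeff n * r := by
    intro r n
    have := congrArg (fun q => q.coeff n) (hc r)
    simpa [coeff_C_mul, coeff_mul_C] using this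
  have h0 : p.coeff 0 * p.coeff 0 = p.coeff 0 := by
    have := congrArg (fun q => q.coeff 0) hp
    simpa [mul_coeff_zero] using this
  intro n
  induction n using Nat.strong_induction_on with
  | _ n ih =>
    intro hn
    obtain ⟨m, rfl⟩ := Nat.exists_eq_succ_of_ne_zero hn
    have hcn := congrArg (fun q => q.coeff (m + 1)) hp
    simp only [coeff_mul] at hcn
    rw [Finset.Nat.sum_antidiagonal_eq_sum_range_succ
      (fun i j => p.coeff i * p.coeff j)] at hcn
    rw [Finset.sum_range_succ] at hcn
    have hfirst : ∑ k ∈ Finset.range (m + 1), p.coeff k * p.coeff (m + 1 - k)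
        = p.coeff 0 * p.coeff (m + 1) := by
      apply Finset.sum_eq_single_of_mem 0 (Finset.mem_range.2 (Nat.succ_pos m))
      intro b hb hb0
      rw [ih b (Finset.mem_range.1 hb) hb0, zero_mul]
    rw [hfirst] at hcn
    simp only [Nat.sub_self] at hcn
    -- hcn : coeff 0 * coeff (m+1) + coeff (m+1) * coeff 0 = coeff (m+1)
    have h2 : p.coeff 0 * p.coeff (m + 1) + p.coeff 0 * p.coeff (m + 1)
        = p.coeff (m + 1) := by
      rw [← hcomm (p.coeff 0) (m + 1)] at hcn
      exact hcn
    have h3 : p.coeff 0 * p.coeff (m + 1) = 0 := by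
      have := congrArg (fun x => p.coeff 0 * x) h2
      simp only [mul_add, ← mul_assoc, h0] at this
      exact add_eq_right.mp this
    rw [h3, add_zero] at h2
    exact h2.symm

open Polynomial in
/-- For any nontrivial ring `R`, the polynomial ring `R[x]` is not Δ-quasipolar. -/
theorem polynomial_not_deltaQuasipolar (R : Type*) [Ring R] [Nontrivial R] :
    ¬ DeltaQuasipolarRing (Polynomial R) := by
  intro h
  obtain ⟨p, hidem, hcomm2, hdelta⟩ := h Polynomial.X
  have hc : ∀ r : R, C r * p = p * C r := fun r =>
    hcomm2 (C r) (by rw [X_mul])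
  have hzero := coeff_eq_zero_of_idem p hidem hc
  have hpC : p = C (p.coeff 0) := by
    ext n
    cases n with
    | zero => simp
    | succ m => simp [hzero (m + 1) (Nat.succ_ne_zero m), coeff_C]
  have hu : IsUnit (X + p + 1) := hdelta 1 isUnit_one
  have hmonic : (X + p + 1).Monic := by
    rw [hpC, ← C_1, add_assoc, ← C_add]
    exact monic_X_add_C _
  have := hmonic.eq_one_of_isUnit hu
  have hX := congrArg (fun q => q.coeff 1) this
  rw [hpC] at hX
  simp at hX
end

section
/- For any nontrivial ring R and any integer n ≥ 2, the full matrix ring M_n(R) of n × n matrices over R is not Δ-quasipolar. -/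
section Aux

open Matrix

variable {R : Type*} [Ring R] {n : ℕ}

lemma Estd_mul_same (i j k : Fin n) :
    single i j (1:R) * single j k (1:R) = single i k (1:R) := by
  simp

lemma Estd_mul_ne (i j k l : Fin n) (h : j ≠ k) :
    single i j (1:R) * single k l (1:R) = 0 :=
  Matrix.single_mul_single_of_ne (1:R) i j k h (1:R)

end Aux

open Matrix in
/-- For any nontrivial ring `R` and `n ≥ 2`, the matrix ring `Mₙ(R)` is not Δ-quasipolar. -/
theorem matrix_not_deltaQuasipolar (R : Type*) [Ring R] [Nontrivial R]
    (n : ℕ) (hn : 2 ≤ n) :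
    ¬ DeltaQuasipolarRing (Matrix (Fin n) (Fin n) R) := by
  intro h
  set i0 : Fin n := ⟨0, by omega⟩ with hi0
  set i1 : Fin n := ⟨1, by omega⟩ with hi1
  have h01 : i0 ≠ i1 := by simp [hi0, hi1, Fin.ext_iff]
  have h10 : i1 ≠ i0 := h01.symm
  set E : Fin n → Fin n → Matrix (Fin n) (Fin n) R :=
    fun i j => single i j (1:R) with hE
  set a : Matrix (Fin n) (Fin n) R := E i0 i1 with ha
  obtain ⟨p, hidem, hc2, hdel⟩ := h a
  -- entries of p are central
  have hcent : ∀ (r : R) (i j : Fin n), r * p i j = p i j * r := by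
    intro r i j
    have hx : a * Matrix.diagonal (fun _ : Fin n => r)
        = Matrix.diagonal (fun _ : Fin n => r) * a := by
      ext k l
      rw [Matrix.mul_diagonal, Matrix.diagonal_mul]
      simp only [ha, hE, Matrix.single, Matrix.of_apply]
      split_ifs <;> simp
    have := hc2 _ hx
    have h' : (Matrix.diagonal (fun _ : Fin n => r) * p) i j
        = (p * Matrix.diagonal (fun _ : Fin n => r)) i j := by rw [this]
    rwa [Matrix.diagonal_mul, Matrix.mul_diagonal] at h'
  -- commutation with E i0 l for l ≠ i0
  have hrowcomm : ∀ l : Fin n, l ≠ i0 → E i0 l * p = p * E i0 l := by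
    intro l hl
    apply hc2
    rw [ha, hE, Estd_mul_ne _ _ _ _ h10, Estd_mul_ne _ _ _ _ hl]
  have hdiag : ∀ l : Fin n, l ≠ i0 → p l l = p i0 i0 := by
    intro l hl
    have h' : (E i0 l * p) i0 l = (p * E i0 l) i0 l := by rw [hrowcomm l hl]
    rw [hE] at h'
    rw [Matrix.single_mul_apply_same, Matrix.mul_single_apply_same,
      one_mul, mul_one] at h'
    exact h'
  have hoff1 : ∀ l : Fin n, l ≠ i0 → ∀ b : Fin n, b ≠ l → p l b = 0 := by
    intro l hl b hb
    have h' : (E i0 l * p) i0 b = (p * E i0 l) i0 b := by rw [hrowcomm l hl]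
    rw [hE] at h'
    rw [Matrix.single_mul_apply_same,
      Matrix.mul_single_apply_of_ne _ _ _ _ _ hb, one_mul] at h'
    exact h'
  have hoff2 : ∀ l : Fin n, l ≠ i0 → l ≠ i1 → p i0 l = 0 := by
    intro l hl0 hl1
    have hx : a * E l i1 = E l i1 * a := by
      rw [ha, hE, Estd_mul_ne _ _ _ _ (Ne.symm hl1), Estd_mul_ne _ _ _ _ h10]
    have h' : (E l i1 * p) i0 i1 = (p * E l i1) i0 i1 := by rw [hc2 _ hx]
    rw [hE] at h'
    rw [Matrix.single_mul_apply_of_ne _ _ _ _ _ (Ne.symm hl0),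
      Matrix.mul_single_apply_same, mul_one] at h'
    exact h'.symm
  set y : R := p i0 i0 with hy
  set z : R := p i0 i1 with hz
  -- idempotency consequences
  have hyy : y * y = y := by
    have h' : (p * p) i1 i1 = p i1 i1 := by rw [hidem]
    rw [Matrix.mul_apply] at h'
    rw [Finset.sum_eq_single i1 (fun b _ hb => by
      rw [hoff1 i1 h10 b hb]; exact zero_mul _) (fun hmem => absurd (Finset.mem_univ i1) hmem)]
      at h'
    rw [hdiag i1 h10] at h'
    exact h'
  have hzz : y * z + z * y = z := by
    have h' : (p * p) i0 i1 = p i0 i1 := by rw [hidem]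
    rw [Matrix.mul_apply] at h'
    rw [Finset.sum_eq_add_of_mem i0 i1 (Finset.mem_univ _) (Finset.mem_univ _) h01
      (fun k _ hk => by rw [hoff2 k hk.1 hk.2]; exact zero_mul _)] at h'
    rw [hdiag i1 h10] at h'
    exact h'
  -- from Delta with u = -1 : y - 1 is a unit
  have hneg1 : IsUnit (-1 : Matrix (Fin n) (Fin n) R) := IsUnit.neg isUnit_one
  obtain ⟨W, hW⟩ := hdel (-1) hneg1
  have hWmul : (a + p + -1) * (W⁻¹).val = 1 := by
    rw [← hW]; exact W.mul_inv
  have hWmul' : (W⁻¹).val * (a + p + -1) = 1 := by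
    rw [← hW]; exact W.inv_mul
  set w : Matrix (Fin n) (Fin n) R := (W⁻¹).val with hw
  have hrowM : ∀ k : Fin n, k ≠ i1 → (a + p + -1) i1 k = 0 := by
    intro k hk
    have hak : a i1 k = 0 := by
      rw [ha, hE]; exact Matrix.single_apply_of_row_ne h01 _ _ _
    have hpk : p i1 k = 0 := hoff1 i1 h10 k hk
    simp [hak, hpk, Matrix.one_apply, Ne.symm hk]
  have hMdiag1 : (a + p + -1) i1 i1 = y - 1 := by
    have hak : a i1 i1 = 0 := by
      rw [ha, hE]; exact Matrix.single_apply_of_row_ne h01 _ _ _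
    simp [hak, hdiag i1 h10, sub_eq_add_neg]
  have hcolM : ∀ k : Fin n, k ≠ i0 → (a + p + -1) k i0 = 0 := by
    intro k hk
    have hak : a k i0 = 0 := by
      rw [ha, hE]; exact Matrix.single_apply_of_col_ne _ _ h10 _
    have hpk : p k i0 = 0 := hoff1 k hk i0 (Ne.symm hk)
    simp [hak, hpk, Matrix.one_apply, hk]
  have hMdiag0 : (a + p + -1) i0 i0 = y - 1 := by
    have hak : a i0 i0 = 0 := by
      rw [ha, hE]; exact Matrix.single_apply_of_col_ne _ _ h10 _
    simp [hak, sub_eq_add_neg, ← hy]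
  have hright : (y - 1) * w i1 i1 = 1 := by
    have h' : ((a + p + -1) * w) i1 i1 = (1 : Matrix (Fin n) (Fin n) R) i1 i1 := by
      rw [hWmul]
    rw [Matrix.mul_apply] at h'
    rw [Finset.sum_eq_single i1 (fun b _ hb => by rw [hrowM b hb]; exact zero_mul _)
      (fun hmem => absurd (Finset.mem_univ i1) hmem)] at h'
    rw [hMdiag1] at h'
    simpa using h'
  have hleft : w i0 i0 * (y - 1) = 1 := by
    have h' : (w * (a + p + -1)) i0 i0 = (1 : Matrix (Fin n) (Fin n) R) i0 i0 := by
      rw [hWmul']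
    rw [Matrix.mul_apply] at h'
    rw [Finset.sum_eq_single i0 (fun b _ hb => by rw [hcolM b hb]; exact mul_zero _)
      (fun hmem => absurd (Finset.mem_univ i0) hmem)] at h'
    rw [hMdiag0] at h'
    simpa using h'
  -- hence y = 0 and z = 0, so p = 0
  have hy0 : y = 0 := by
    have h1 : y * (y - 1) = 0 := by rw [mul_sub, hyy, mul_one, sub_self]
    calc y = y * ((y - 1) * w i1 i1) := by rw [hright, mul_one]
    _ = y * (y - 1) * w i1 i1 := by rw [mul_assoc]
    _ = 0 := by rw [h1, zero_mul]
  have hz0 : z = 0 := by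
    have := hzz
    rw [hy0, zero_mul, zero_add, mul_zero] at this
    exact this.symm
  have hp0 : p = 0 := by
    ext k l
    by_cases hk : k = i0
    · subst hk
      by_cases hl : l = i0
      · subst hl; simpa [← hy] using hy0
      · by_cases hl1 : l = i1
        · subst hl1; simpa [← hz] using hz0
        · simpa using hoff2 l hl hl1
    · by_cases hl : l = k
      · subst hl
        simpa [hdiag _ hk] using hy0
      · simpa using hoff1 k hk l hl
  rw [hp0, add_zero] at hdel
  -- construct the unit u with a + u not a unit
  set A : Matrix (Fin n) (Fin n) R := E i0 i0 + E i1 i1 with hA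
  set B : Matrix (Fin n) (Fin n) R := E i1 i0 - E i0 i1 with hB
  have hAA : A * A = A := by
    rw [hA, hE]
    simp only [add_mul, mul_add, Estd_mul_same, Estd_mul_ne _ _ _ _ h01,
      Estd_mul_ne _ _ _ _ h10]
    abel
  have hBB : B * B = -A := by
    rw [hB, hA, hE]
    simp only [sub_mul, mul_sub, Estd_mul_same, Estd_mul_ne _ _ _ _ h01,
      Estd_mul_ne _ _ _ _ h10]
    abel
  have hABe : A * B = B := by
    rw [hA, hB, hE]
    simp only [add_mul, mul_sub, mul_add, sub_mul, Estd_mul_same,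
      Estd_mul_ne _ _ _ _ h01, Estd_mul_ne _ _ _ _ h10]
    abel
  have hBAe : B * A = B := by
    rw [hA, hB, hE]
    simp only [add_mul, mul_sub, mul_add, sub_mul, Estd_mul_same,
      Estd_mul_ne _ _ _ _ h01, Estd_mul_ne _ _ _ _ h10]
    abel
  set u : Matrix (Fin n) (Fin n) R := 1 - A + B with hu
  set v : Matrix (Fin n) (Fin n) R := 1 - A - B with hv
  have huv : u * v = 1 := by
    rw [hu, hv]
    simp only [mul_sub, sub_mul, mul_add, add_mul, mul_one, one_mul,
      hAA, hBB, hABe, hBAe]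
    abel
  have hvu : v * u = 1 := by
    rw [hu, hv]
    simp only [mul_sub, sub_mul, mul_add, add_mul, mul_one, one_mul,
      hAA, hBB, hABe, hBAe]
    abel
  have hu_unit : IsUnit u := ⟨⟨u, v, huv, hvu⟩, rfl⟩
  have hau : IsUnit (a + u) := hdel u hu_unit
  have hM0 : a + u = 1 - A + E i1 i0 := by
    rw [hu, hB, ha]; abel
  have hrow0 : ∀ j : Fin n, (a + u) i0 j = 0 := by
    intro j
    rw [hM0, hA, hE]
    simp only [Matrix.add_apply, Matrix.sub_apply, Matrix.one_apply,
      Matrix.single, Matrix.of_apply]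
    have : ¬ (i1 = i0 ∧ i1 = j) := fun hh => h10 hh.1
    have h2 : ¬ (i1 = i0 ∧ i0 = j) := fun hh => h10 hh.1
    simp only [this, h2, if_false, add_zero]
    by_cases hj : i0 = j
    · simp [hj]
    · simp [hj]
  obtain ⟨V, hV⟩ := hau
  have hVmul : (a + u) * (V⁻¹).val = 1 := by
    rw [← hV]; exact V.mul_inv
  have hcontra : (0 : R) = 1 := by
    have h' : ((a + u) * (V⁻¹).val) i0 i0
        = (1 : Matrix (Fin n) (Fin n) R) i0 i0 := by rw [hVmul]
    rw [Matrix.mul_apply] at h'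
    rw [Finset.sum_eq_zero (fun k _ => by rw [hrow0 k]; exact zero_mul _)] at h'
    simpa using h'
  exact one_ne_zero hcontra.symm
end

section
/- Let R be a ring and s, t central units of R, and let H_{(s,t)}(R) be the subring of M₃(R) consisting of all matrices [[a,0,0],[c,d,e],[0,0,f]] with a, c, d, e, f ∈ R, a − d = sc and d − f = te. Then Δ(H_{(s,t)}(R)) consists exactly of those elements [[a,0,0],[c,d,e],[0,0,f]] of H_{(s,t)}(R) with a, d, f ∈ Δ(R). -/
/-- The ring `H_{(s,t)}(R)`: all matrices `[[a,0,0],[c,d,e],[0,0,f]]` in `M₃(R)`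
with `a - d = s * c` and `d - f = t * e`, realized as a subring of `M₃(R)`. -/
def Hst {R : Type*} [Ring R] (s t : R) (hs : s ∈ Set.center R) (ht : t ∈ Set.center R) :
    Subring (Matrix (Fin 3) (Fin 3) R) where
  carrier := {M | M 0 1 = 0 ∧ M 0 2 = 0 ∧ M 2 0 = 0 ∧ M 2 1 = 0 ∧
    M 0 0 - M 1 1 = s * M 1 0 ∧ M 1 1 - M 2 2 = t * M 1 2}
  zero_mem' := by simp
  one_mem' := by simp [Matrix.one_apply]
  add_mem' := by
    rintro M N ⟨h1, h2, h3, h4, h5, h6⟩ ⟨g1, g2, g3, g4, g5, g6⟩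
    refine ⟨by simp [h1, g1], by simp [h2, g2], by simp [h3, g3], by simp [h4, g4], ?_, ?_⟩
    · have : (M + N) 0 0 - (M + N) 1 1 = (M 0 0 - M 1 1) + (N 0 0 - N 1 1) := by
        simp [Matrix.add_apply]; abel
      rw [this, h5, g5, Matrix.add_apply, mul_add]
    · have : (M + N) 1 1 - (M + N) 2 2 = (M 1 1 - M 2 2) + (N 1 1 - N 2 2) := by
        simp [Matrix.add_apply]; abel
      rw [this, h6, g6, Matrix.add_apply, mul_add]
  neg_mem' := by
    rintro M ⟨h1, h2, h3, h4, h5, h6⟩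
    refine ⟨by simp [h1], by simp [h2], by simp [h3], by simp [h4], ?_, ?_⟩
    · have : (-M) 0 0 - (-M) 1 1 = -(M 0 0 - M 1 1) := by simp [Matrix.neg_apply]; abel
      rw [this, h5, Matrix.neg_apply, ← mul_neg]
    · have : (-M) 1 1 - (-M) 2 2 = -(M 1 1 - M 2 2) := by simp [Matrix.neg_apply]; abel
      rw [this, h6, Matrix.neg_apply, ← mul_neg]
  mul_mem' := by
    rintro M N ⟨h1, h2, h3, h4, h5, h6⟩ ⟨g1, g2, g3, g4, g5, g6⟩
    have hs' : ∀ b : R, b * s = s * b := fun b => ((Set.mem_center_iff.mp hs).comm b).symm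
    have ht' : ∀ b : R, b * t = t * b := fun b => ((Set.mem_center_iff.mp ht).comm b).symm
    have e00 : (M * N) 0 0 = M 0 0 * N 0 0 := by
      simp [Matrix.mul_apply, Fin.sum_univ_three, h1, h2]
    have e11 : (M * N) 1 1 = M 1 1 * N 1 1 := by
      simp [Matrix.mul_apply, Fin.sum_univ_three, g1, g4]
    have e22 : (M * N) 2 2 = M 2 2 * N 2 2 := by
      simp [Matrix.mul_apply, Fin.sum_univ_three, h3, h4]
    have e10 : (M * N) 1 0 = M 1 0 * N 0 0 + M 1 1 * N 1 0 := by
      simp [Matrix.mul_apply, Fin.sum_univ_three, g3]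
    have e12 : (M * N) 1 2 = M 1 1 * N 1 2 + M 1 2 * N 2 2 := by
      simp [Matrix.mul_apply, Fin.sum_univ_three, g2]
    refine ⟨?_, ?_, ?_, ?_, ?_, ?_⟩
    · simp [Matrix.mul_apply, Fin.sum_univ_three, h1, h2, g1, g4]
    · simp [Matrix.mul_apply, Fin.sum_univ_three, h1, h2, g2]
    · simp [Matrix.mul_apply, Fin.sum_univ_three, h3, h4, g1, g3]
    · simp [Matrix.mul_apply, Fin.sum_univ_three, h3, h4, g4]
    · rw [e00, e11, e10]
      have : M 0 0 * N 0 0 - M 1 1 * N 1 1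
          = (M 0 0 - M 1 1) * N 0 0 + M 1 1 * (N 0 0 - N 1 1) := by noncomm_ring
      rw [this, h5, g5, mul_add, mul_assoc, ← mul_assoc (M 1 1) s, hs', mul_assoc]
    · rw [e11, e22, e12]
      have : M 1 1 * N 1 1 - M 2 2 * N 2 2
          = M 1 1 * (N 1 1 - N 2 2) + (M 1 1 - M 2 2) * N 2 2 := by noncomm_ring
      rw [this, h6, g6, mul_add, mul_assoc, ← mul_assoc (M 1 1) t, ht', mul_assoc]

section Aux

variable {R : Type*} [Ring R] {s t : R} {hs : s ∈ Set.center R} {ht : t ∈ Set.center R}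

lemma Hst_isUnit_diag {M : Hst s t hs ht} (h : IsUnit M) :
    IsUnit ((M : Matrix (Fin 3) (Fin 3) R) 0 0) ∧
    IsUnit ((M : Matrix (Fin 3) (Fin 3) R) 1 1) ∧
    IsUnit ((M : Matrix (Fin 3) (Fin 3) R) 2 2) := by
  obtain ⟨N, hMN, hNM⟩ := isUnit_iff_exists.mp h
  obtain ⟨h1, h2, h3, h4, h5, h6⟩ := M.2
  obtain ⟨g1, g2, g3, g4, g5, g6⟩ := N.2
  have hMN' : (M : Matrix (Fin 3) (Fin 3) R) * (N : Matrix (Fin 3) (Fin 3) R) = 1 := by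
    exact_mod_cast congrArg Subtype.val hMN
  have hNM' : (N : Matrix (Fin 3) (Fin 3) R) * (M : Matrix (Fin 3) (Fin 3) R) = 1 := by
    exact_mod_cast congrArg Subtype.val hNM
  refine ⟨isUnit_iff_exists.mpr ⟨N.1 0 0, ?_, ?_⟩,
    isUnit_iff_exists.mpr ⟨N.1 1 1, ?_, ?_⟩,
    isUnit_iff_exists.mpr ⟨N.1 2 2, ?_, ?_⟩⟩
  · have := congrFun (congrFun hMN' 0) 0
    simpa [Matrix.mul_apply, Fin.sum_univ_three, h1, h2] using this
  · have := congrFun (congrFun hNM' 0) 0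
    simpa [Matrix.mul_apply, Fin.sum_univ_three, g1, g2] using this
  · have := congrFun (congrFun hMN' 1) 1
    simpa [Matrix.mul_apply, Fin.sum_univ_three, g1, g4] using this
  · have := congrFun (congrFun hNM' 1) 1
    simpa [Matrix.mul_apply, Fin.sum_univ_three, h1, h4] using this
  · have := congrFun (congrFun hMN' 2) 2
    simpa [Matrix.mul_apply, Fin.sum_univ_three, h3, h4] using this
  · have := congrFun (congrFun hNM' 2) 2
    simpa [Matrix.mul_apply, Fin.sum_univ_three, g3, g4] using this

lemma Hst_isUnit_of_diag {M : Hst s t hs ht}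
    (ha : IsUnit ((M : Matrix (Fin 3) (Fin 3) R) 0 0))
    (hd : IsUnit ((M : Matrix (Fin 3) (Fin 3) R) 1 1))
    (hf : IsUnit ((M : Matrix (Fin 3) (Fin 3) R) 2 2)) : IsUnit M := by
  obtain ⟨h1, h2, h3, h4, h5, h6⟩ := M.2
  set a := (M : Matrix (Fin 3) (Fin 3) R) 0 0 with ha'
  set c := (M : Matrix (Fin 3) (Fin 3) R) 1 0 with hc'
  set d := (M : Matrix (Fin 3) (Fin 3) R) 1 1 with hd'
  set e := (M : Matrix (Fin 3) (Fin 3) R) 1 2 with he'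
  set f := (M : Matrix (Fin 3) (Fin 3) R) 2 2 with hf'
  set ai := ((ha.unit⁻¹ : Rˣ) : R) with hai'
  set di := ((hd.unit⁻¹ : Rˣ) : R) with hdi'
  set fi := ((hf.unit⁻¹ : Rˣ) : R) with hfi'
  have haai : a * ai = 1 := ha.mul_val_inv
  have haia : ai * a = 1 := ha.val_inv_mul
  have hddi : d * di = 1 := hd.mul_val_inv
  have hdid : di * d = 1 := hd.val_inv_mul
  have hffi : f * fi = 1 := hf.mul_val_inv
  have hfif : fi * f = 1 := hf.val_inv_mul
  have hs' : ∀ b : R, b * s = s * b := fun b => ((Set.mem_center_iff.mp hs).comm b).symm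
  have ht' : ∀ b : R, b * t = t * b := fun b => ((Set.mem_center_iff.mp ht).comm b).symm
  set N : Matrix (Fin 3) (Fin 3) R :=
    Matrix.of ![![ai, 0, 0], ![-(di * c * ai), di, -(di * e * fi)], ![0, 0, fi]] with hN
  have hNmem : N ∈ Hst s t hs ht := by
    refine ⟨rfl, rfl, rfl, rfl, ?_, ?_⟩
    · show ai - di = s * -(di * c * ai)
      have e1 : di * d * ai = ai := by rw [hdid, one_mul]
      have e2 : di * a * ai = di := by rw [mul_assoc, haai, mul_one]
      have this1 : ai - di = di * (d - a) * ai := by rw [mul_sub, sub_mul, e1, e2]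
      have hda : d - a = -(s * c) := by rw [← neg_sub, h5]
      have key : di * (s * c) * ai = s * (di * c * ai) := by
        rw [← mul_assoc, hs' di]; simp [mul_assoc]
      rw [this1, hda, mul_neg, neg_mul, mul_neg, key]
    · show di - fi = t * -(di * e * fi)
      have e3 : di * f * fi = di := by rw [mul_assoc, hffi, mul_one]
      have e4 : di * d * fi = fi := by rw [hdid, one_mul]
      have this2 : di - fi = di * (f - d) * fi := by rw [mul_sub, sub_mul, e3, e4]
      have hfd : f - d = -(t * e) := by rw [← neg_sub, h6]
      have key : di * (t * e) * fi = t * (di * e * fi) := by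
        rw [← mul_assoc, ht' di]; simp [mul_assoc]
      rw [this2, hfd, mul_neg, neg_mul, mul_neg, key]
  refine isUnit_iff_exists.mpr ⟨⟨N, hNmem⟩, ?_, ?_⟩
  · apply Subtype.ext
    show (M : Matrix (Fin 3) (Fin 3) R) * N = 1
    ext i j
    fin_cases i <;> fin_cases j <;>
      simp [hN, Matrix.mul_apply, Fin.sum_univ_three, Matrix.one_apply, h1, h2, h3, h4,
        ← ha', ← hc', ← hd', ← he', ← hf', haai, hddi, hffi, ← mul_assoc]
  · apply Subtype.ext
    show N * (M : Matrix (Fin 3) (Fin 3) R) = 1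
    ext i j
    fin_cases i <;> fin_cases j <;>
      simp [hN, Matrix.mul_apply, Fin.sum_univ_three, Matrix.one_apply, h1, h2, h3, h4,
        ← ha', ← hc', ← hd', ← he', ← hf', haia, hdid, hfif, mul_assoc]

end Aux

/-- `Δ(H_{(s,t)}(R))` consists exactly of the matrices in `H_{(s,t)}(R)` whose
diagonal entries all lie in `Δ(R)`. -/
theorem Delta_Hst {R : Type*} [Ring R] (s t : R)
    (hs : s ∈ Set.center R) (ht : t ∈ Set.center R)
    (hsu : IsUnit s) (htu : IsUnit t) :
    Delta (Hst s t hs ht) =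
      {M : Hst s t hs ht |
        (M : Matrix (Fin 3) (Fin 3) R) 0 0 ∈ Delta R ∧
        (M : Matrix (Fin 3) (Fin 3) R) 1 1 ∈ Delta R ∧
        (M : Matrix (Fin 3) (Fin 3) R) 2 2 ∈ Delta R} := by
  have hs' : ∀ b : R, b * s = s * b := fun b => ((Set.mem_center_iff.mp hs).comm b).symm
  have ht' : ∀ b : R, b * t = t * b := fun b => ((Set.mem_center_iff.mp ht).comm b).symm
  set si := ((hsu.unit⁻¹ : Rˣ) : R) with hsi'
  set ti := ((htu.unit⁻¹ : Rˣ) : R) with hti'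
  have hssi : s * si = 1 := hsu.mul_val_inv
  have htti : t * ti = 1 := htu.mul_val_inv
  ext M
  constructor
  · intro hM
    refine ⟨?_, ?_, ?_⟩
    · intro u hu
      set U : Matrix (Fin 3) (Fin 3) R :=
        Matrix.of ![![u, 0, 0], ![si * (u - 1), 1, 0], ![0, 0, 1]] with hU
      have hUmem : U ∈ Hst s t hs ht := by
        refine ⟨rfl, rfl, rfl, rfl, ?_, ?_⟩
        · show u - 1 = s * (si * (u - 1))
          rw [← mul_assoc, hssi, one_mul]
        · show (1 : R) - 1 = t * 0
          simp
      have hUu : IsUnit (⟨U, hUmem⟩ : Hst s t hs ht) :=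
        Hst_isUnit_of_diag (by simpa [hU] using hu) (by simp [hU]) (by simp [hU])
      have := (Hst_isUnit_diag (hM _ hUu)).1
      simpa [hU] using this
    · intro u hu
      set U : Matrix (Fin 3) (Fin 3) R :=
        Matrix.of ![![1, 0, 0], ![si * (1 - u), u, ti * (u - 1)], ![0, 0, 1]] with hU
      have hUmem : U ∈ Hst s t hs ht := by
        refine ⟨rfl, rfl, rfl, rfl, ?_, ?_⟩
        · show (1 : R) - u = s * (si * (1 - u))
          rw [← mul_assoc, hssi, one_mul]
        · show u - 1 = t * (ti * (u - 1))
          rw [← mul_assoc, htti, one_mul]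
      have hUu : IsUnit (⟨U, hUmem⟩ : Hst s t hs ht) :=
        Hst_isUnit_of_diag (by simp [hU]) (by simpa [hU] using hu) (by simp [hU])
      have := (Hst_isUnit_diag (hM _ hUu)).2.1
      simpa [hU] using this
    · intro u hu
      set U : Matrix (Fin 3) (Fin 3) R :=
        Matrix.of ![![1, 0, 0], ![0, 1, ti * (1 - u)], ![0, 0, u]] with hU
      have hUmem : U ∈ Hst s t hs ht := by
        refine ⟨rfl, rfl, rfl, rfl, ?_, ?_⟩
        · show (1 : R) - 1 = s * 0
          simp
        · show (1 : R) - u = t * (ti * (1 - u))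
          rw [← mul_assoc, htti, one_mul]
      have hUu : IsUnit (⟨U, hUmem⟩ : Hst s t hs ht) :=
        Hst_isUnit_of_diag (by simp [hU]) (by simp [hU]) (by simpa [hU] using hu)
      have := (Hst_isUnit_diag (hM _ hUu)).2.2
      simpa [hU] using this
  · rintro ⟨h0, h1, h2⟩ U hU
    obtain ⟨u0, u1, u2⟩ := Hst_isUnit_diag hU
    exact Hst_isUnit_of_diag (h0 _ u0) (h1 _ u1) (h2 _ u2)
end

section
/- Let R be a ring, s, t central units of R, and S = H_{(s,t)}(R) the subring of M₃(R) of all matrices [[a,0,0],[c,d,e],[0,0,f]] with a − d = sc and d − f = te. Then S is Δ-quasipolar if and only if R is Δ-quasipolar. -/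
section Aux

theorem isUnit_pair {M N : Type*} [Monoid M] [Monoid N] {x : M × N} :
    IsUnit x ↔ IsUnit x.1 ∧ IsUnit x.2 := by
  constructor
  · intro h
    exact ⟨h.map (MonoidHom.fst M N), h.map (MonoidHom.snd M N)⟩
  · rintro ⟨⟨u, hu⟩, ⟨v, hv⟩⟩
    exact ⟨⟨((u : M), (v : N)), ((↑u⁻¹ : M), (↑v⁻¹ : N)),
      Prod.ext u.mul_inv v.mul_inv, Prod.ext u.inv_mul v.inv_mul⟩, Prod.ext hu hv⟩

theorem dq_of_equiv {A B : Type*} [Ring A] [Ring B] (e : A ≃+* B)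
    (h : DeltaQuasipolarRing A) : DeltaQuasipolarRing B := by
  intro b
  obtain ⟨p, hp, hc, hd⟩ := h (e.symm b)
  refine ⟨e p, ?_, ?_, ?_⟩
  · show e p * e p = e p
    rw [← map_mul, hp]
  · intro x hx
    have hx' : e.symm b * e.symm x = e.symm x * e.symm b := by
      have := congrArg e.symm hx
      simpa using this
    have := congrArg e (hc (e.symm x) hx')
    simpa using this
  · intro u hu
    have hu' : IsUnit (e.symm u) := hu.map e.symm.toRingHom
    have := (hd _ hu').map e.toRingHom
    simpa using this

theorem dq_fst {A B : Type*} [Ring A] [Ring B] (h : DeltaQuasipolarRing (A × B)) :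
    DeltaQuasipolarRing A := by
  intro a
  obtain ⟨p, hp, hc, hd⟩ := h (a, 0)
  refine ⟨p.1, congrArg Prod.fst hp, ?_, ?_⟩
  · intro x hx
    exact congrArg Prod.fst (hc (x, 0) (Prod.ext hx rfl))
  · intro u hu
    have h1 : IsUnit ((u, (1 : B)) : A × B) := isUnit_pair.mpr ⟨hu, isUnit_one⟩
    exact (hd _ h1).map (RingHom.fst A B)

theorem dq_prod {A B : Type*} [Ring A] [Ring B] (hA : DeltaQuasipolarRing A)
    (hB : DeltaQuasipolarRing B) : DeltaQuasipolarRing (A × B) := by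
  intro ab
  obtain ⟨p, hp, hcp, hdp⟩ := hA ab.1
  obtain ⟨q, hq, hcq, hdq⟩ := hB ab.2
  refine ⟨(p, q), Prod.ext hp hq, ?_, ?_⟩
  · intro x hx
    exact Prod.ext (hcp x.1 (congrArg Prod.fst hx)) (hcq x.2 (congrArg Prod.snd hx))
  · intro u hu
    rw [isUnit_pair] at hu ⊢
    exact ⟨hdp u.1 hu.1, hdq u.2 hu.2⟩

/-- The isomorphism `H_{(s,t)}(R) ≃+* R × R × R` when `s, t` are units. -/
noncomputable def hstEquiv {R : Type*} [Ring R] (s t : R) (hs : s ∈ Set.center R)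
    (ht : t ∈ Set.center R) (hsu : IsUnit s) (htu : IsUnit t) :
    Hst s t hs ht ≃+* R × R × R where
  toFun M := (M.1 0 0, M.1 1 1, M.1 2 2)
  invFun x := ⟨Matrix.of ![![x.1, 0, 0],
      ![(↑hsu.unit⁻¹ : R) * (x.1 - x.2.1), x.2.1, (↑htu.unit⁻¹ : R) * (x.2.1 - x.2.2)],
      ![0, 0, x.2.2]], by
    refine ⟨rfl, rfl, rfl, rfl, ?_, ?_⟩
    · show x.1 - x.2.1 = s * ((↑hsu.unit⁻¹ : R) * (x.1 - x.2.1))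
      rw [← mul_assoc, hsu.mul_val_inv, one_mul]
    · show x.2.1 - x.2.2 = t * ((↑htu.unit⁻¹ : R) * (x.2.1 - x.2.2))
      rw [← mul_assoc, htu.mul_val_inv, one_mul]⟩
  left_inv M := by
    obtain ⟨h1, h2, h3, h4, h5, h6⟩ := M.2
    apply Subtype.ext
    ext i j
    fin_cases i <;> fin_cases j <;>
      simp [h1, h2, h3, h4]
    · rw [h5, ← mul_assoc, hsu.val_inv_mul, one_mul]
    · rw [h6, ← mul_assoc, htu.val_inv_mul, one_mul]
  right_inv x := rfl
  map_mul' M N := by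
    obtain ⟨h1, h2, h3, h4, h5, h6⟩ := M.2
    obtain ⟨g1, g2, g3, g4, g5, g6⟩ := N.2
    have hMN : ∀ i j, ((M * N : Hst s t hs ht) : Matrix (Fin 3) (Fin 3) R) i j
        = (M.1 * N.1) i j := fun i j => rfl
    refine Prod.ext ?_ (Prod.ext ?_ ?_) <;> rw [hMN] <;>
      simp [Matrix.mul_apply, Fin.sum_univ_three, h1, h2, h3, h4, g1, g2, g3, g4]
  map_add' M N := rfl

end Aux

/-- `H_{(s,t)}(R)` is Δ-quasipolar if and only if `R` is Δ-quasipolar. -/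
theorem Hst_deltaQuasipolar_iff {R : Type*} [Ring R] (s t : R)
    (hs : s ∈ Set.center R) (ht : t ∈ Set.center R)
    (hsu : IsUnit s) (htu : IsUnit t) :
    DeltaQuasipolarRing (Hst s t hs ht) ↔ DeltaQuasipolarRing R := by
  constructor
  · intro h
    exact dq_fst (dq_of_equiv (hstEquiv s t hs ht hsu htu) h)
  · intro h
    exact dq_of_equiv (hstEquiv s t hs ht hsu htu).symm (dq_prod h (dq_prod h h))
end
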